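/- If α > β (with ρ > α, β > γ, all the quantities α−β−γ+ρ and β−α−γ+ρ positive), then the max-margin classifier on the spectral contrastive toy representations that separates by the spurious attribute has margin √(β−α−γ+ρ), strictly less than the margin √(α−β−γ+ρ) of the classifier separating by class; hence when instead the connectivity satisfies the paper's empirical regime (spurious connectivity exceeding invariant connectivity, i.e., the roles swapped), the max-margin downstream classifier aligns with the spurious attribute. -/

import Mathlib

/-!
Any two points with opposite labels bound the margin of a unit-norm affine classifier: adding the
two margin constraints cancels the bias, and Cauchy–Schwarz gives `2 m ≤ ‖x₊ - x₋‖`. For the four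
points `(±a, ±b)`, labelled by the sign of one coordinate, the two points differing only in that
coordinate are at distance twice its magnitude, and the coordinate projection attains this bound.
-/

open Matrix

/-- The four toy spectral contrastive representations (±B_sp, ±B_inv) ∈ ℝ² with
B_sp = √(β−α−γ+ρ) and B_inv = √(α−β−γ+ρ). -/
noncomputable def zrep (ρ α β γ : ℝ) (p : Fin 2 × Fin 2) : Fin 2 → ℝ :=
  ![(-1 : ℝ) ^ (p.2 : ℕ) * Real.sqrt (β - α - γ + ρ),
    (-1 : ℝ) ^ (p.1 : ℕ) * Real.sqrt (α - β - γ + ρ)]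

section Margin

variable {ι : Type*} {n : ℕ}

def marginSet (X : ι → Fin n → ℝ) (y : ι → ℝ) : Set ℝ :=
  {m | ∃ (w : Fin n → ℝ) (b : ℝ), ∑ k, w k ^ 2 = 1 ∧ ∀ i, m ≤ y i * (w ⬝ᵥ X i + b)}

theorem dotProduct_le_sqrt_sum_sq {w : Fin n → ℝ} (hw : ∑ k, w k ^ 2 = 1) (d : Fin n → ℝ) :
    w ⬝ᵥ d ≤ √(∑ k, d k ^ 2) := by
  refine (le_abs_self _).trans (Real.abs_le_sqrt ?_)
  simpa [dotProduct, hw] using Finset.sum_mul_sq_le_sq_mul_sq Finset.univ w d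

theorem two_mul_le_of_mem_marginSet {X : ι → Fin n → ℝ} {y : ι → ℝ} {m : ℝ}
    (hm : m ∈ marginSet X y) {i j : ι} (hi : y i = 1) (hj : y j = -1) :
    2 * m ≤ √(∑ k, (X i k - X j k) ^ 2) := by
  obtain ⟨w, b, hw, hmargin⟩ := hm
  have hmi := hmargin i
  have hmj := hmargin j
  rw [hi] at hmi
  rw [hj] at hmj
  have hcs := dotProduct_le_sqrt_sum_sq hw (X i - X j)
  rw [dotProduct_sub] at hcs
  simp only [Pi.sub_apply] at hcs
  linarith

theorem isGreatest_marginSet {X : ι → Fin n → ℝ} {y : ι → ℝ} {m : ℝ} {w : Fin n → ℝ} {b : ℝ}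
    (hw : ∑ k, w k ^ 2 = 1) (hmargin : ∀ i, m ≤ y i * (w ⬝ᵥ X i + b)) {i j : ι}
    (hi : y i = 1) (hj : y j = -1) (hdist : √(∑ k, (X i k - X j k) ^ 2) = 2 * m) :
    IsGreatest (marginSet X y) m :=
  ⟨⟨w, b, hw, hmargin⟩, fun _ hm' => by
    have := two_mul_le_of_mem_marginSet hm' hi hj
    linarith⟩

end Margin

def signedSquare (a b : ℝ) (p : Fin 2 × Fin 2) : Fin 2 → ℝ :=
  ![(-1 : ℝ) ^ (p.2 : ℕ) * a, (-1 : ℝ) ^ (p.1 : ℕ) * b]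

theorem isGreatest_marginSet_signedSquare_snd {a : ℝ} (ha : 0 ≤ a) (b : ℝ) :
    IsGreatest (marginSet (signedSquare a b) fun p => (-1 : ℝ) ^ (p.2 : ℕ)) a := by
  refine isGreatest_marginSet (w := ![1, 0]) (b := 0) (i := (0, 0)) (j := (0, 1))
    (by simp) ?_ (by simp) (by simp) ?_
  · rintro ⟨p, q⟩
    fin_cases p <;> fin_cases q <;> simp [signedSquare, dotProduct]
  · simp [signedSquare, ← two_mul, Real.sqrt_sq, ha]

theorem isGreatest_marginSet_signedSquare_fst (a : ℝ) {b : ℝ} (hb : 0 ≤ b) :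
    IsGreatest (marginSet (signedSquare a b) fun p => (-1 : ℝ) ^ (p.1 : ℕ)) b := by
  refine isGreatest_marginSet (w := ![0, 1]) (b := 0) (i := (0, 0)) (j := (1, 0))
    (by simp) ?_ (by simp) (by simp) ?_
  · rintro ⟨p, q⟩
    fin_cases p <;> fin_cases q <;> simp [signedSquare, dotProduct]
  · simp [signedSquare, ← two_mul, Real.sqrt_sq, hb]

theorem stmt11_general (ρ α β γ : ℝ) (hαβ : α > β) (hpos2 : 0 < α - β - γ + ρ) :
    IsGreatest {m : ℝ | ∃ (w : Fin 2 → ℝ) (b : ℝ), w 0 ^ 2 + w 1 ^ 2 = 1 ∧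
        ∀ p : Fin 2 × Fin 2, m ≤ (-1 : ℝ) ^ (p.2 : ℕ) * (w ⬝ᵥ zrep ρ α β γ p + b)}
      (Real.sqrt (β - α - γ + ρ)) ∧
    IsGreatest {m : ℝ | ∃ (w : Fin 2 → ℝ) (b : ℝ), w 0 ^ 2 + w 1 ^ 2 = 1 ∧
        ∀ p : Fin 2 × Fin 2, m ≤ (-1 : ℝ) ^ (p.1 : ℕ) * (w ⬝ᵥ zrep ρ α β γ p + b)}
      (Real.sqrt (α - β - γ + ρ)) ∧
    Real.sqrt (β - α - γ + ρ) < Real.sqrt (α - β - γ + ρ) := by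
  have hzrep : zrep ρ α β γ = signedSquare √(β - α - γ + ρ) √(α - β - γ + ρ) := rfl
  simp only [hzrep, ← Fin.sum_univ_two (f := fun k => _ ^ 2)]
  refine ⟨isGreatest_marginSet_signedSquare_snd (Real.sqrt_nonneg _) _,
    isGreatest_marginSet_signedSquare_fst _ (Real.sqrt_nonneg _), ?_⟩
  exact (Real.sqrt_lt_sqrt_iff_of_pos hpos2).2 (by linarith)

/-- If α > β (with ρ > α, β > γ and both margin arguments positive), the max-margin classifier
separating the toy representations by the spurious attribute has margin √(β−α−γ+ρ), strictly
less than the margin √(α−β−γ+ρ) of the classifier separating by class. -/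
theorem stmt11 (ρ α β γ : ℝ) (hρα : ρ > α) (hβγ : β > γ) (hαβ : α > β)
    (hpos1 : 0 < β - α - γ + ρ) (hpos2 : 0 < α - β - γ + ρ) :
    IsGreatest {m : ℝ | ∃ (w : Fin 2 → ℝ) (b : ℝ), w 0 ^ 2 + w 1 ^ 2 = 1 ∧
        ∀ p : Fin 2 × Fin 2, m ≤ (-1 : ℝ) ^ (p.2 : ℕ) * (w ⬝ᵥ zrep ρ α β γ p + b)}
      (Real.sqrt (β - α - γ + ρ)) ∧
    IsGreatest {m : ℝ | ∃ (w : Fin 2 → ℝ) (b : ℝ), w 0 ^ 2 + w 1 ^ 2 = 1 ∧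
        ∀ p : Fin 2 × Fin 2, m ≤ (-1 : ℝ) ^ (p.1 : ℕ) * (w ⬝ᵥ zrep ρ α β γ p + b)}
      (Real.sqrt (α - β - γ + ρ)) ∧
    Real.sqrt (β - α - γ + ρ) < Real.sqrt (α - β - γ + ρ) :=
  stmt11_general ρ α β γ hαβ hpos2
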